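/- arXiv:2201.08966 — 13 statements merged into one kernel-verified Lean document; each statement's English description precedes it below -/
import Mathlib

section
/- Let n ≥ 2 be an integer and ξ a positive real number satisfying condition C(n). Then ξ ≥ 2/n. -/
/-- Let `n ≥ 2` be an integer and `ξ` a positive real number satisfying
condition `C(n)`: for every integer `m` with `(m − n)·ξ > 1` one has
`m·ξ ≥ 2 + ⌈(m − n)·ξ⌉`. Then `ξ ≥ 2/n`. -/
theorem stmt1 (n : ℤ) (hn : 2 ≤ n) (ξ : ℝ) (hξ : 0 < ξ)
    (hC : ∀ m : ℤ, ((m : ℝ) - (n : ℝ)) * ξ > 1 →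
      (m : ℝ) * ξ ≥ 2 + (⌈((m : ℝ) - (n : ℝ)) * ξ⌉ : ℝ)) :
    ξ ≥ 2 / (n : ℝ) := by
  set m : ℤ := n + ⌈2 / ξ⌉ with hm
  have hcast : ((m : ℝ) - (n : ℝ)) = (⌈2 / ξ⌉ : ℝ) := by push_cast [hm]; ring
  have h2 : (2 : ℝ) / ξ ≤ (⌈2 / ξ⌉ : ℝ) := Int.le_ceil _
  have hgt : ((m : ℝ) - (n : ℝ)) * ξ ≥ 2 := by
    rw [hcast]
    calc (2 : ℝ) = (2 / ξ) * ξ := by field_simp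
    _ ≤ (⌈2 / ξ⌉ : ℝ) * ξ := by nlinarith
  have h1 : ((m : ℝ) - (n : ℝ)) * ξ > 1 := by linarith
  have key := hC m h1
  have hceil : ((m : ℝ) - (n : ℝ)) * ξ ≤ (⌈((m : ℝ) - (n : ℝ)) * ξ⌉ : ℝ) := Int.le_ceil _
  have hn2 : (n : ℝ) * ξ ≥ 2 := by nlinarith
  have hnpos : (0 : ℝ) < n := by exact_mod_cast lt_of_lt_of_le (by norm_num) hn
  rw [ge_iff_le, div_le_iff₀ hnpos]
  linarith [hn2]
end

section
/- Let k ≥ 0 be an integer, n = 3k + 2, and ξ a positive real number satisfying condition C(n). Then ξ ≥ 8/(9k + 8). -/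
/-- Let `k ≥ 0` be an integer, `n = 3k + 2`, and `ξ` a positive real number
satisfying condition `C(n)`. Then `ξ ≥ 8/(9k + 8)`. -/
theorem stmt2 (k n : ℤ) (hk : 0 ≤ k) (hn : n = 3 * k + 2) (ξ : ℝ) (hξ : 0 < ξ)
    (hC : ∀ m : ℤ, ((m : ℝ) - (n : ℝ)) * ξ > 1 →
      (m : ℝ) * ξ ≥ 2 + (⌈((m : ℝ) - (n : ℝ)) * ξ⌉ : ℝ)) :
    ξ ≥ 8 / (9 * (k : ℝ) + 8) := by
  by_contra h
  push_neg at h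
  have hk' : (0:ℝ) ≤ (k:ℝ) := by exact_mod_cast hk
  have hA : (0:ℝ) < 9 * (k:ℝ) + 8 := by linarith
  rw [lt_div_iff₀ hA] at h
  have h8 : (9 * (k:ℝ) + 8) * ξ < 8 := by linarith [h]
  have hξ1 : ξ < 1 := by nlinarith
  set d : ℤ := ⌊1/ξ⌋ + 1 with hd
  have hdgt : 1 < (d:ℝ) * ξ := by
    have h1 : 1/ξ < (d:ℝ) := by
      push_cast [hd]
      exact Int.lt_floor_add_one (1/ξ)
    calc (1:ℝ) = (1/ξ) * ξ := by field_simp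
    _ < (d:ℝ) * ξ := mul_lt_mul_of_pos_right h1 hξ
  have hdle : (d:ℝ) * ξ ≤ 1 + ξ := by
    have h1 : (d:ℝ) ≤ 1/ξ + 1 := by
      push_cast [hd]
      linarith [Int.floor_le (1/ξ)]
    have h2 : (d:ℝ) * ξ ≤ (1/ξ + 1) * ξ := mul_le_mul_of_nonneg_right h1 hξ.le
    have h3 : (1/ξ + 1) * ξ = 1 + ξ := by field_simp
    linarith
  have harg : (((n + d : ℤ):ℝ) - (n:ℝ)) * ξ > 1 := by push_cast; linarith [hdgt]
  have key := hC (n + d) harg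
  have hceil : ⌈(((n + d : ℤ):ℝ) - (n:ℝ)) * ξ⌉ = 2 := by
    rw [Int.ceil_eq_iff]
    constructor
    · push_cast; linarith [hdgt]
    · push_cast; linarith [hdle, hξ1]
  rw [hceil] at key
  have hn' : (n:ℝ) = 3 * (k:ℝ) + 2 := by exact_mod_cast hn
  push_cast at key
  nlinarith [key, hdle, hn', h8, hξ1]
end

section
/- Let k ≥ 0 and l ≥ 1 be integers, n = 3k + 2, and ξ a positive real number satisfying condition C(n). If ξ ≥ 2·4^l / ((2·4^l + 1)k + 2·4^l), then ξ ≥ 2·4^{l+1} / ((2·4^{l+1} + 1)k + 2·4^{l+1}). -/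
set_option maxHeartbeats 1000000 in
/-- Let `k ≥ 0` and `l ≥ 1` be integers, `n = 3k + 2`, and `ξ` a positive real
number satisfying condition `C(n)`. If `ξ ≥ 2·4^l / ((2·4^l + 1)k + 2·4^l)`, then
`ξ ≥ 2·4^(l+1) / ((2·4^(l+1) + 1)k + 2·4^(l+1))`. -/
theorem stmt3 (k n : ℤ) (l : ℕ) (hk : 0 ≤ k) (hl : 1 ≤ l) (hn : n = 3 * k + 2)
    (ξ : ℝ) (hξ : 0 < ξ)
    (hC : ∀ m : ℤ, ((m : ℝ) - (n : ℝ)) * ξ > 1 →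
      (m : ℝ) * ξ ≥ 2 + (⌈((m : ℝ) - (n : ℝ)) * ξ⌉ : ℝ))
    (hind : ξ ≥ 2 * 4 ^ l / ((2 * 4 ^ l + 1) * (k : ℝ) + 2 * 4 ^ l)) :
    ξ ≥ 2 * 4 ^ (l + 1) / ((2 * 4 ^ (l + 1) + 1) * (k : ℝ) + 2 * 4 ^ (l + 1)) := by
  set A : ℤ := 2 * 4 ^ l with hAdef
  have hA : 0 < A := by positivity
  set q : ℤ := k / A with hqdef
  have hq0 : 0 ≤ q := Int.ediv_nonneg hk hA.le
  have hes : A * (k / A) + k % A = k := Int.mul_ediv_add_emod k A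
  have hr0 : 0 ≤ k % A := Int.emod_nonneg k hA.ne'
  have hr1 : k % A < A := Int.emod_lt_of_pos k hA
  have hAqk : A * q ≤ k := by rw [hqdef]; linarith
  have hkAq : k ≤ A * q + A - 1 := by rw [hqdef]; linarith
  -- cast versions
  have hAr : ((A : ℝ)) = 2 * 4 ^ l := by push_cast [hAdef]; ring
  have hA2 : (2 : ℝ) ≤ (A : ℝ) := by
    rw [hAr]; nlinarith [one_le_pow₀ (by norm_num : (1:ℝ) ≤ 4) (n := l)]
  have hkr : (0 : ℝ) ≤ (k : ℝ) := by exact_mod_cast hk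
  have hqr : (0 : ℝ) ≤ (q : ℝ) := by exact_mod_cast hq0
  have hAqkr : (A : ℝ) * q ≤ (k : ℝ) := by exact_mod_cast hAqk
  have hkAqr : (k : ℝ) ≤ (A : ℝ) * q + A - 1 := by exact_mod_cast hkAq
  set D : ℝ := ((A : ℝ) + 1) * (k : ℝ) + (A : ℝ) with hDdef
  have hD : 0 < D := by nlinarith
  have hindD : ξ ≥ (A : ℝ) / D := by
    have e : (A : ℝ) / D = 2 * 4 ^ l / ((2 * 4 ^ l + 1) * (k : ℝ) + 2 * 4 ^ l) := by
      rw [hDdef, hAr]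
    rw [e]; exact hind
  have hAxD : (A : ℝ) ≤ ξ * D := by
    rw [ge_iff_le, div_le_iff₀ hD] at hindD; exact hindD
  set m : ℤ := 4 * k + q + 4 with hmdef
  have hmn : ((m : ℝ) - (n : ℝ)) = (k : ℝ) + q + 2 := by
    rw [hmdef, hn]; push_cast; ring
  -- key inequality: (k+q+2)*A ≥ D + 1
  have hkey : D + 1 ≤ ((k : ℝ) + q + 2) * A := by
    rw [hDdef]; nlinarith
  have hgt1 : ((m : ℝ) - (n : ℝ)) * ξ > 1 := by
    rw [hmn]
    have h1 : 0 < (k : ℝ) + q + 2 := by linarith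
    nlinarith [mul_le_mul_of_nonneg_left hAxD h1.le]
  have hCm := hC m hgt1
  have hceil : (2 : ℝ) ≤ (⌈((m : ℝ) - (n : ℝ)) * ξ⌉ : ℝ) := by
    have h2 : (1 : ℤ) < ⌈((m : ℝ) - (n : ℝ)) * ξ⌉ := Int.lt_ceil.mpr (by exact_mod_cast hgt1)
    exact_mod_cast h2
  have hm4 : (4 : ℝ) ≤ (m : ℝ) * ξ := by linarith
  have hmr : (m : ℝ) = 4 * k + q + 4 := by rw [hmdef]; push_cast; ring
  -- final comparison
  have hD2A : (2 * 4 ^ (l + 1) + 1) * (k : ℝ) + 2 * 4 ^ (l + 1)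
      = (4 * A + 1) * (k : ℝ) + 4 * A := by
    rw [hAr]; push_cast; ring
  have hD2 : 0 < (2 * 4 ^ (l + 1) + 1) * (k : ℝ) + 2 * 4 ^ (l + 1) := by
    rw [hD2A]; nlinarith
  rw [ge_iff_le, div_le_iff₀ hD2, hD2A]
  have h4l : (2 : ℝ) * 4 ^ (l + 1) = 4 * A := by rw [hAr]; push_cast; ring
  rw [h4l]
  have hA' : (0 : ℝ) < (A : ℝ) := by linarith
  have hD2Am : (A : ℝ) * (m : ℝ) ≤ (4 * A + 1) * (k : ℝ) + 4 * A := by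
    rw [hmr]; nlinarith
  nlinarith [mul_le_mul_of_nonneg_left hD2Am hξ.le, mul_le_mul_of_nonneg_left hm4 hA'.le]
end

section
/- Let k ≥ 0 be an integer, n = 3k + 2, and ξ a positive real number satisfying condition C(n). Then ξ ≥ 1/(k + 1) = 3/(n + 1). -/
/-- Let `k ≥ 0` be an integer, `n = 3k + 2`, and `ξ` a positive real number
satisfying condition `C(n)`. Then `ξ ≥ 1/(k + 1) = 3/(n + 1)`. -/
theorem stmt4 (k n : ℤ) (hk : 0 ≤ k) (hn : n = 3 * k + 2) (ξ : ℝ) (hξ : 0 < ξ)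
    (hC : ∀ m : ℤ, ((m : ℝ) - (n : ℝ)) * ξ > 1 →
      (m : ℝ) * ξ ≥ 2 + (⌈((m : ℝ) - (n : ℝ)) * ξ⌉ : ℝ)) :
    ξ ≥ 1 / ((k : ℝ) + 1) ∧ 1 / ((k : ℝ) + 1) = 3 / ((n : ℝ) + 1) := by
  have hkR : (0:ℝ) ≤ (k:ℝ) := by exact_mod_cast hk
  have hk1 : (0:ℝ) < (k:ℝ) + 1 := by linarith
  -- main claim by induction
  have claim : ∀ l : ℕ, (2 + 3*(l:ℝ)) ≤ ξ * (((k:ℝ)+1)*(2+3*(l:ℝ)) + k) := by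
    intro l
    induction l with
    | zero =>
      -- need n * ξ ≥ 2
      obtain ⟨t, ht⟩ := exists_nat_gt (2/ξ)
      have htξ : (2:ℝ) < (t:ℝ) * ξ := by
        rw [div_lt_iff₀ hξ] at ht; linarith
      have h1 : (((n + t : ℤ) : ℝ) - (n:ℝ)) * ξ > 1 := by
        push_cast; ring_nf; push_cast; nlinarith
      have h2 := hC (n + t) h1
      have hce : (((n + t : ℤ) : ℝ) - (n:ℝ)) * ξ ≤ (⌈(((n + t : ℤ) : ℝ) - (n:ℝ)) * ξ⌉ : ℝ) :=
        Int.le_ceil _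
      have hsimp : (((n + t : ℤ) : ℝ) - (n:ℝ)) = (t:ℝ) := by push_cast; ring
      rw [hsimp] at h2 hce
      have hn2 : (n:ℝ) * ξ ≥ 2 := by
        have : ((n:ℝ) + t) * ξ ≥ 2 + (t:ℝ) * ξ := by
          push_cast at h2; linarith
        nlinarith
      have hnR : (n:ℝ) = 3*(k:ℝ) + 2 := by rw [hn]; push_cast; ring
      rw [hnR] at hn2
      simp only [Nat.cast_zero]
      nlinarith
    | succ l ih =>
      set N : ℝ := 2 + 3*(l:ℝ) with hN
      have hNpos : (0:ℝ) < N := by positivity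
      set D : ℝ := ((k:ℝ)+1)*N + (k:ℝ) with hD
      have hDpos : (0:ℝ) < D := by positivity
      -- t = (k+1)*(2+3l) + k + 1 as an integer
      set tz : ℤ := (k+1)*(2+3*(l:ℤ)) + k + 1 with htz
      have htzR : (tz:ℝ) = D + 1 := by rw [htz, hD, hN]; push_cast; ring
      -- tz * ξ > N
      have hξD : ξ * D ≥ N := by nlinarith
      have htξN : N < (tz:ℝ) * ξ := by
        rw [htzR]; nlinarith
      have h1 : (((n + tz : ℤ) : ℝ) - (n:ℝ)) * ξ > 1 := by
        have hsimp : (((n + tz : ℤ) : ℝ) - (n:ℝ)) = (tz:ℝ) := by push_cast; ring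
        rw [hsimp]; nlinarith
      have h2 := hC (n + tz) h1
      have hsimp : (((n + tz : ℤ) : ℝ) - (n:ℝ)) = (tz:ℝ) := by push_cast; ring
      rw [hsimp] at h2
      -- ceiling bound: ⌈tz ξ⌉ ≥ (2+3l) + 1
      have hceil : ((2 + 3*(l:ℤ) + 1 : ℤ) : ℝ) ≤ (⌈(tz:ℝ) * ξ⌉ : ℝ) := by
        have hlt : (2 + 3*(l:ℤ)) < ⌈(tz:ℝ) * ξ⌉ := by
          rw [Int.lt_ceil]
          push_cast
          convert htξN using 2 <;> push_cast <;> ring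
        exact_mod_cast hlt
      have hm : ((n:ℝ) + tz) * ξ ≥ 2 + ((2 + 3*(l:ℤ) + 1 : ℤ) : ℝ) := by
        push_cast at h2 ⊢
        push_cast at hceil
        linarith
      have hnR : (n:ℝ) = 3*(k:ℝ) + 2 := by rw [hn]; push_cast; ring
      have hmval : (n:ℝ) + (tz:ℝ) = ((k:ℝ)+1)*(2+3*((l:ℝ)+1)) + (k:ℝ) := by
        rw [hnR, htzR, hD, hN]; ring
      push_cast at hm
      push_cast
      nlinarith [hm, hmval]
  constructor
  · by_contra h
    push_neg at h
    have hε : 0 < 1 - ((k:ℝ)+1) * ξ := by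
      rw [lt_div_iff₀ hk1] at h; linarith
    obtain ⟨L, hL⟩ := exists_nat_gt ((k:ℝ) * ξ / (1 - ((k:ℝ)+1) * ξ))
    have hLε : (k:ℝ) * ξ < (L:ℝ) * (1 - ((k:ℝ)+1) * ξ) := by
      rw [div_lt_iff₀ hε] at hL; linarith
    have hc := claim L
    nlinarith [hc, hLε, L.cast_nonneg (α := ℝ)] 
  · have hnR : (n:ℝ) = 3*(k:ℝ) + 2 := by rw [hn]; push_cast; ring
    rw [hnR]
    have h2 : (0:ℝ) < 3*(k:ℝ)+2+1 := by linarith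
    field_simp
    ring
end

section
/- Let k ≥ 1 be an integer, n = 3k + 1, and ξ a positive real number satisfying condition C(n). Then ξ ≥ 8/(9k + 5). -/
/-- Let `k ≥ 1` be an integer, `n = 3k + 1`, and `ξ` a positive real number
satisfying condition `C(n)`. Then `ξ ≥ 8/(9k + 5)`. -/
theorem stmt5 (k n : ℤ) (hk : 1 ≤ k) (hn : n = 3 * k + 1) (ξ : ℝ) (hξ : 0 < ξ)
    (hC : ∀ m : ℤ, ((m : ℝ) - (n : ℝ)) * ξ > 1 →
      (m : ℝ) * ξ ≥ 2 + (⌈((m : ℝ) - (n : ℝ)) * ξ⌉ : ℝ)) :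
    ξ ≥ 8 / (9 * (k : ℝ) + 5) := by
  have hkR : (1:ℝ) ≤ (k:ℝ) := by exact_mod_cast hk
  have hnR : (n:ℝ) = 3*(k:ℝ)+1 := by rw [hn]; push_cast; ring
  have hnpos : (0:ℝ) < (n:ℝ) := by rw [hnR]; linarith
  -- Step 1: n * ξ ≥ 2
  have hstep1 : (n:ℝ) * ξ ≥ 2 := by
    set m0 : ℤ := n + ⌈2/ξ⌉ with hm0
    have hdiff : ((m0:ℝ) - n) = (⌈(2/ξ:ℝ)⌉ : ℝ) := by rw [hm0]; push_cast; ring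
    have hc : (⌈(2/ξ:ℝ)⌉:ℝ) ≥ 2/ξ := Int.le_ceil _
    have h1 : ((m0:ℝ) - n) * ξ > 1 := by
      rw [hdiff]
      have : (2/ξ) * ξ = 2 := div_mul_cancel₀ 2 (ne_of_gt hξ)
      nlinarith
    have h2 := hC m0 h1
    have h3 : (⌈((m0:ℝ)-(n:ℝ))*ξ⌉:ℝ) ≥ ((m0:ℝ)-(n:ℝ))*ξ := Int.le_ceil _
    nlinarith
  -- Step 2: m = ⌊(9k+5)/2⌋
  set m : ℤ := (9*k+5)/2 with hm
  have hm1 : 9*k+4 ≤ 2*m ∧ 2*m ≤ 9*k+5 := by omega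
  have hmR1 : 9*(k:ℝ)+4 ≤ 2*(m:ℝ) := by exact_mod_cast hm1.1
  have hmR2 : 2*(m:ℝ) ≤ 9*(k:ℝ)+5 := by exact_mod_cast hm1.2
  have ha : ((m:ℝ) - n) > 0 := by rw [hnR]; linarith
  have h1 : ((m:ℝ) - n) * ξ > 1 := by
    -- n*(m-n)*ξ ≥ 2*(m-n) ≥ 3k+2 > n
    nlinarith [mul_le_mul_of_nonneg_left hstep1 (le_of_lt ha)]
  have h2 := hC m h1
  have hceil : (2:ℝ) ≤ (⌈((m:ℝ)-(n:ℝ))*ξ⌉:ℝ) := by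
    have : (1:ℤ) < ⌈((m:ℝ)-(n:ℝ))*ξ⌉ := by
      rw [Int.lt_ceil]; exact_mod_cast h1
    exact_mod_cast this
  have hmξ : (m:ℝ) * ξ ≥ 4 := by linarith
  rw [ge_iff_le, div_le_iff₀ (by linarith)]
  nlinarith
end

section
/- Let k ≥ 1 and l ≥ 1 be integers, n = 3k + 1, and ξ a positive real number satisfying condition C(n). If ξ ≥ 2·4^l / ((2·4^l + 1)k + (4^{l+1} − 1)/3), then ξ ≥ 2·4^{l+1} / ((2·4^{l+1} + 1)k + (4^{l+2} − 1)/3). (Here (4^{l+1} − 1)/3 = 4^l + 4^{l−1} + ⋯ + 4 + 1.) -/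
lemma aux4 (m : ℕ) : ∃ s : ℤ, 3 * s + 1 = 4 ^ m := by
  induction m with
  | zero => exact ⟨0, by norm_num⟩
  | succ n ih =>
    obtain ⟨s, hs⟩ := ih
    exact ⟨4 * s + 1, by rw [pow_succ]; linarith⟩

/-- Let `k ≥ 1` and `l ≥ 1` be integers, `n = 3k + 1`, and `ξ` a positive real
number satisfying condition `C(n)`.
If `ξ ≥ 2·4^l / ((2·4^l + 1)k + (4^(l+1) − 1)/3)`, then
`ξ ≥ 2·4^(l+1) / ((2·4^(l+1) + 1)k + (4^(l+2) − 1)/3)`. -/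
theorem stmt6 (k n : ℤ) (l : ℕ) (hk : 1 ≤ k) (hl : 1 ≤ l) (hn : n = 3 * k + 1)
    (ξ : ℝ) (hξ : 0 < ξ)
    (hC : ∀ m : ℤ, ((m : ℝ) - (n : ℝ)) * ξ > 1 →
      (m : ℝ) * ξ ≥ 2 + (⌈((m : ℝ) - (n : ℝ)) * ξ⌉ : ℝ))
    (hind : ξ ≥ 2 * 4 ^ l / ((2 * 4 ^ l + 1) * (k : ℝ) + (4 ^ (l + 1) - 1) / 3)) :
    ξ ≥ 2 * 4 ^ (l + 1) / ((2 * 4 ^ (l + 1) + 1) * (k : ℝ) + (4 ^ (l + 2) - 1) / 3) := by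
  obtain ⟨s, hs⟩ := aux4 (l + 1)
  set P : ℤ := 4 ^ l with hPdef
  have hP : (1 : ℤ) ≤ P := one_le_pow₀ (by norm_num)
  have hs4 : 3 * s + 1 = 4 * P := by rw [hs, hPdef, pow_succ]; ring
  have hs1 : 1 ≤ s := by linarith
  set D : ℤ := (2 * P + 1) * k + s with hDdef
  have hD1 : 1 ≤ D := by nlinarith
  have h2P : (0 : ℤ) < 2 * P := by linarith
  set a : ℤ := D / (2 * P) + 1 with hadef
  have hq := Int.mul_ediv_add_emod D (2 * P)
  have hr0 : 0 ≤ D % (2 * P) := Int.emod_nonneg D (by linarith)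
  have hr1 : D % (2 * P) < 2 * P := Int.emod_lt_of_pos D h2P
  have hqa : D < 2 * P * a := by
    have : 2 * P * a = 2 * P * (D / (2 * P)) + 2 * P := by ring
    omega
  have hqa' : 2 * P * a ≤ D + 2 * P := by
    have : 2 * P * a = 2 * P * (D / (2 * P)) + 2 * P := by ring
    omega
  have ha1 : 1 ≤ a := by
    have : 0 ≤ D / (2 * P) := Int.ediv_nonneg (by linarith) (by linarith)
    omega
  -- real casts
  have hPr : ((P : ℝ)) = 4 ^ l := by push_cast [hPdef]; norm_num
  have hsr : ((s : ℝ)) = ((4 : ℝ) ^ (l + 1) - 1) / 3 := by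
    have h : 3 * (s : ℝ) + 1 = 4 ^ (l + 1) := by exact_mod_cast hs
    linarith
  have hDr : ((D : ℝ)) = (2 * 4 ^ l + 1) * (k : ℝ) + (4 ^ (l + 1) - 1) / 3 := by
    rw [hDdef]; push_cast [hPr, hsr]; ring
  have hDrpos : (0 : ℝ) < (D : ℝ) := by exact_mod_cast hD1.trans_lt' (by norm_num)
  have hPrpos : (0 : ℝ) < (P : ℝ) := by exact_mod_cast hP.trans_lt' (by norm_num)
  have hξD : ξ ≥ 2 * (P : ℝ) / (D : ℝ) := by rw [hPr, hDr]; exact hind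
  have haξ : ((a : ℝ)) * ξ > 1 := by
    have har : (1 : ℝ) ≤ (a : ℝ) := by exact_mod_cast ha1
    have h1 : ((a : ℝ)) * ξ ≥ (a : ℝ) * (2 * P / D) := by
      apply mul_le_mul_of_nonneg_left hξD (by linarith)
    have h2 : (a : ℝ) * (2 * P / D) = (2 * P * a : ℝ) / D := by ring
    have h3 : ((D : ℝ)) < ((2 * P * a : ℤ) : ℝ) := by exact_mod_cast hqa
    push_cast at h3
    have : (1 : ℝ) < (2 * (P : ℝ) * a) / D := (one_lt_div hDrpos).mpr (by linarith)
    calc (1:ℝ) < (2 * (P:ℝ) * a) / D := this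
      _ = (a:ℝ) * (2 * P / D) := by ring
      _ ≤ (a:ℝ) * ξ := h1
  set m : ℤ := a + n with hmdef
  have hma : ((m : ℝ)) - (n : ℝ) = (a : ℝ) := by push_cast [hmdef]; ring
  have hCm := hC m (by rw [hma]; exact haξ)
  rw [hma] at hCm
  have hceil : (2 : ℤ) ≤ ⌈(a : ℝ) * ξ⌉ := by
    have : (1 : ℤ) < ⌈(a : ℝ) * ξ⌉ := Int.lt_ceil.mpr (by exact_mod_cast haξ)
    omega
  have hm4 : ((m : ℝ)) * ξ ≥ 4 := by
    have : ((2 : ℤ) : ℝ) ≤ (⌈(a : ℝ) * ξ⌉ : ℝ) := by exact_mod_cast hceil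
    push_cast at this
    linarith
  have hmpos : (1 : ℤ) ≤ m := by omega
  have hmrpos : (0 : ℝ) < (m : ℝ) := by exact_mod_cast hmpos.trans_lt' (by norm_num)
  have hξm : ξ ≥ 4 / (m : ℝ) := by
    rw [ge_iff_le, div_le_iff₀ hmrpos]
    linarith [hm4]
  -- target denominator
  set Tz : ℤ := (8 * P + 1) * k + 4 * s + 1 with hTdef
  have hT : 2 * P * m ≤ Tz := by
    have : 2 * P * m = 2 * P * a + 2 * P * (3 * k + 1) := by rw [hmdef, hn]; ring
    nlinarith
  have hTr : ((Tz : ℝ)) = (2 * 4 ^ (l + 1) + 1) * (k : ℝ) + (4 ^ (l + 2) - 1) / 3 := by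
    rw [hTdef]
    push_cast [hsr]
    have h1 : (4 : ℝ) ^ (l + 1) = 4 * 4 ^ l := by rw [pow_succ]; ring
    have h2 : (4 : ℝ) ^ (l + 2) = 16 * 4 ^ l := by rw [pow_add]; ring
    rw [hPr, h1, h2]; ring
  have hTzpos : (1 : ℤ) ≤ Tz := by nlinarith
  have hTrpos : (0 : ℝ) < (Tz : ℝ) := by exact_mod_cast hTzpos.trans_lt' (by norm_num)
  have hfinal : 2 * (4 : ℝ) ^ (l + 1) / (Tz : ℝ) ≤ 4 / (m : ℝ) := by
    rw [div_le_div_iff₀ hTrpos hmrpos]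
    have hcast : ((2 * P * m : ℤ) : ℝ) ≤ ((Tz : ℤ) : ℝ) := by exact_mod_cast hT
    push_cast at hcast
    have h1 : (4 : ℝ) ^ (l + 1) = 4 * (P : ℝ) := by rw [hPr, pow_succ]; ring
    rw [h1]
    linarith
  rw [← hTr]
  linarith
end

section
/- Let k ≥ 1 be an integer, n = 3k + 1, and ξ a positive real number satisfying condition C(n). Then ξ ≥ 3/(3k + 2), i.e., ξ ≥ 1/(k + 2/3). -/
/-- Let `k ≥ 1` be an integer, `n = 3k + 1`, and `ξ` a positive real number
satisfying condition `C(n)`. Then `ξ ≥ 3/(3k + 2)`, i.e., `ξ ≥ 1/(k + 2/3)`. -/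
theorem stmt7 (k n : ℤ) (hk : 1 ≤ k) (hn : n = 3 * k + 1) (ξ : ℝ) (hξ : 0 < ξ)
    (hC : ∀ m : ℤ, ((m : ℝ) - (n : ℝ)) * ξ > 1 →
      (m : ℝ) * ξ ≥ 2 + (⌈((m : ℝ) - (n : ℝ)) * ξ⌉ : ℝ)) :
    ξ ≥ 3 / (3 * (k : ℝ) + 2) ∧ 3 / (3 * (k : ℝ) + 2) = 1 / ((k : ℝ) + 2 / 3) := by
  have hk' : (1 : ℝ) ≤ (k : ℝ) := by exact_mod_cast hk
  have hden : (0 : ℝ) < 3 * (k : ℝ) + 2 := by linarith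
  constructor
  · by_contra h
    push_neg at h
    -- ξ < 3/(3k+2), hence (3k+2)·ξ < 3 and ξ < 3/5 < 1
    have h1 : (3 * (k : ℝ) + 2) * ξ < 3 := by
      have := (lt_div_iff₀ hden).mp h
      linarith
    have hξ1 : ξ < 1 := by
      have : (3 : ℝ) / (3 * (k : ℝ) + 2) ≤ 3 / 5 := by
        apply div_le_div_of_nonneg_left (by norm_num) (by norm_num) (by linarith)
      linarith
    -- let t be the least integer with t·ξ > 2
    set t : ℤ := ⌊2 / ξ⌋ + 1 with ht
    have ht1 : (2 : ℝ) < (t : ℝ) * ξ := by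
      have := Int.lt_floor_add_one (2 / ξ)
      have h2 : 2 / ξ * ξ = 2 := by field_simp
      push_cast [ht]
      nlinarith [Int.lt_floor_add_one (2 / ξ)]
    have ht2 : (t : ℝ) * ξ ≤ 2 + ξ := by
      have := Int.floor_le (2 / ξ)
      have h2 : 2 / ξ * ξ = 2 := by field_simp
      push_cast [ht]
      nlinarith
    -- ceiling of t·ξ is 3
    have hceil : ⌈(t : ℝ) * ξ⌉ = 3 := by
      rw [Int.ceil_eq_iff]
      constructor
      · push_cast; linarith
      · push_cast; linarith
    -- apply condition C at m = n + t
    have hkey := hC (n + t)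
    have hcast : ((n + t : ℤ) : ℝ) - (n : ℝ) = (t : ℝ) := by push_cast; ring
    rw [hcast] at hkey
    have hgt : (t : ℝ) * ξ > 1 := by linarith
    have := hkey hgt
    rw [hceil] at this
    have hnr : ((n : ℤ) : ℝ) = 3 * (k : ℝ) + 1 := by rw [hn]; push_cast; ring
    push_cast at this
    rw [hnr] at this
    nlinarith
  · field_simp
end

section
/- Let k ≥ 1 be an integer, n = 3k + 1, and ξ a positive real number satisfying condition C(n). Then ξ ≥ 2/(2k + 1) = 6/(2n + 1). -/
/-- Let `k ≥ 1` be an integer, `n = 3k + 1`, and `ξ` a positive real number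
satisfying condition `C(n)`. Then `ξ ≥ 2/(2k + 1) = 6/(2n + 1)`. -/
theorem stmt8 (k n : ℤ) (hk : 1 ≤ k) (hn : n = 3 * k + 1) (ξ : ℝ) (hξ : 0 < ξ)
    (hC : ∀ m : ℤ, ((m : ℝ) - (n : ℝ)) * ξ > 1 →
      (m : ℝ) * ξ ≥ 2 + (⌈((m : ℝ) - (n : ℝ)) * ξ⌉ : ℝ)) :
    ξ ≥ 2 / (2 * (k : ℝ) + 1) ∧ 2 / (2 * (k : ℝ) + 1) = 6 / (2 * (n : ℝ) + 1) := by
  have hK : (1 : ℝ) ≤ (k : ℝ) := by exact_mod_cast hk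
  have hnR : (n : ℝ) = 3 * (k : ℝ) + 1 := by rw [hn]; push_cast; ring
  -- Base: n * ξ ≥ 2
  have base : (3 * (k : ℝ) + 1) * ξ ≥ 2 := by
    set M : ℤ := ⌈1 / ξ⌉ + 1 with hM
    have hMξ : (M : ℝ) * ξ > 1 := by
      have h1 : (1 / ξ : ℝ) ≤ (⌈1 / ξ⌉ : ℝ) := Int.le_ceil _
      have h2 : (1 / ξ + 1) * ξ ≤ (M : ℝ) * ξ := by
        apply mul_le_mul_of_nonneg_right _ hξ.le
        push_cast [hM]; linarith
      have h3 : (1 / ξ + 1) * ξ = 1 + ξ := by field_simp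
      linarith
    have key := hC (n + M)
    have hcast : ((↑(n + M) : ℝ) - (n : ℝ)) = (M : ℝ) := by push_cast; ring
    rw [hcast] at key
    have key2 := key hMξ
    have hceil : (M : ℝ) * ξ ≤ (⌈(M : ℝ) * ξ⌉ : ℝ) := Int.le_ceil _
    have : ((n + M : ℤ) : ℝ) = (n : ℝ) + (M : ℝ) := by push_cast; ring
    rw [this] at key2
    nlinarith [key2, hceil]
  -- Induction: for all j : ℕ, ((2j+3)k + 2j+1) * ξ ≥ 2j+2
  have ind : ∀ j : ℕ, ((2 * (j : ℝ) + 3) * (k : ℝ) + (2 * (j : ℝ) + 1)) * ξ ≥ 2 * (j : ℝ) + 2 := by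
    intro j
    induction j with
    | zero => simpa using base
    | succ j ih =>
      set J : ℝ := (j : ℝ) with hJ
      have hJ0 : 0 ≤ J := by positivity
      set c : ℝ := 2 * J + 2 with hc
      set D : ℝ := (2 * J + 3) * (k : ℝ) + (2 * J + 1) with hD
      have hDpos : 0 < D := by rw [hD]; nlinarith
      -- t = (2j+2)(k+1)
      set t : ℤ := (2 * (j : ℤ) + 2) * (k + 1) with ht
      have htR : (t : ℝ) = c * ((k : ℝ) + 1) := by rw [ht, hc, hJ]; push_cast; ring
      -- t * ξ > c - 1 = 2j+1
      have htξ : (t : ℝ) * ξ > 2 * J + 1 := by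
        rw [htR]
        have h1 : c * ((k : ℝ) + 1) * ξ * D ≥ c * ((k : ℝ) + 1) * c := by
          have hcpos : 0 < c * ((k : ℝ) + 1) := by rw [hc]; nlinarith
          have := mul_le_mul_of_nonneg_left ih hcpos.le
          nlinarith [ih, hcpos]
        have h2 : c * ((k : ℝ) + 1) * c > (2 * J + 1) * D := by
          rw [hc, hD]; nlinarith
        nlinarith [hDpos]
      have htξ1 : (t : ℝ) * ξ > 1 := by nlinarith
      have key := hC (n + t)
      have hcast : ((↑(n + t) : ℝ) - (n : ℝ)) = (t : ℝ) := by push_cast; ring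
      rw [hcast] at key
      have key2 := key htξ1
      -- ceiling ≥ 2j+2
      have hceil : ((2 * (j : ℤ) + 2 : ℤ) : ℝ) ≤ (⌈(t : ℝ) * ξ⌉ : ℝ) := by
        have : (2 * (j : ℤ) + 1 : ℤ) < ⌈(t : ℝ) * ξ⌉ := by
          rw [Int.lt_ceil]
          push_cast
          linarith [htξ]
        exact_mod_cast this
      have hcast2 : ((n + t : ℤ) : ℝ) = (n : ℝ) + (t : ℝ) := by push_cast; ring
      rw [hcast2] at key2
      have hceil2 : ((2 * (j : ℤ) + 2 : ℤ) : ℝ) = c := by rw [hc, hJ]; push_cast; ring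
      rw [hceil2] at hceil
      -- (n + t) ξ ≥ 2 + c
      have final : ((n : ℝ) + (t : ℝ)) * ξ ≥ 2 + c := by linarith
      rw [hnR, htR] at final
      push_cast
      rw [hc] at final
      nlinarith [final]
  -- Key: (k+1) ξ > 1
  have key : ((k : ℝ) + 1) * ξ > 1 := by
    by_contra h
    push_neg at h
    set j : ℕ := k.toNat with hj
    have hjR : ((j : ℕ) : ℝ) = (k : ℝ) := by
      rw [hj]
      have : ((k.toNat : ℤ) : ℝ) = (k : ℝ) := by
        rw [Int.toNat_of_nonneg (by linarith)]
      exact_mod_cast this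
    have hI := ind j
    rw [hjR] at hI
    set K : ℝ := (k : ℝ)
    set D : ℝ := (2 * K + 3) * K + (2 * K + 1) with hD
    have hDpos : 0 < D := by rw [hD]; nlinarith
    -- (k+2) ξ > 1
    have h2 : (K + 2) * ξ > 1 := by
      have h1 : (K + 2) * ((2 * K + 3) * K + (2 * K + 1)) * ξ ≥ (K + 2) * (2 * K + 2) := by
        nlinarith [hI]
      have h3 : (K + 2) * (2 * K + 2) > D := by rw [hD]; nlinarith
      nlinarith [hDpos]
    have hCk := hC (n + (k + 2))
    have hcast : ((↑(n + (k + 2)) : ℝ) - (n : ℝ)) = K + 2 := by push_cast; ring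
    rw [hcast] at hCk
    have key2 := hCk h2
    have hceil : (2 : ℝ) ≤ (⌈(K + 2) * ξ⌉ : ℝ) := by
      have : (1 : ℤ) < ⌈(K + 2) * ξ⌉ := by
        rw [Int.lt_ceil]; push_cast; linarith
      exact_mod_cast this
    have hcast2 : ((n + (k + 2) : ℤ) : ℝ) = 4 * K + 3 := by
      push_cast [hn]; ring
    rw [hcast2] at key2
    -- (4K+3) ξ ≥ 4 but (K+1) ξ ≤ 1: contradiction
    nlinarith [key2, hceil, h, hξ, hK]
  -- Final: m = 4k + 2 = n + (k+1)
  have hCf := hC (n + (k + 1))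
  have hcast : ((↑(n + (k + 1)) : ℝ) - (n : ℝ)) = (k : ℝ) + 1 := by push_cast; ring
  rw [hcast] at hCf
  have key2 := hCf key
  have hceil : (2 : ℝ) ≤ (⌈((k : ℝ) + 1) * ξ⌉ : ℝ) := by
    have : (1 : ℤ) < ⌈((k : ℝ) + 1) * ξ⌉ := by
      rw [Int.lt_ceil]; push_cast; linarith
    exact_mod_cast this
  have hcast2 : ((n + (k + 1) : ℤ) : ℝ) = 4 * (k : ℝ) + 2 := by push_cast [hn]; ring
  rw [hcast2] at key2
  have hmain : (4 * (k : ℝ) + 2) * ξ ≥ 4 := by linarith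
  constructor
  · rw [ge_iff_le, div_le_iff₀ (by nlinarith : (0:ℝ) < 2 * (k : ℝ) + 1)]
    nlinarith
  · rw [hnR]
    have h1 : (0:ℝ) < 2 * (k : ℝ) + 1 := by nlinarith
    have h2 : (0:ℝ) < 2 * (3 * (k : ℝ) + 1) + 1 := by nlinarith
    field_simp
    ring
end

section
/- Let k ≥ 1 be an integer, n = 3k, and ξ a positive real number satisfying condition C(n). Then ξ ≥ 8/(9k + 2). -/
/-- Let `k ≥ 1` be an integer, `n = 3k`, and `ξ` a positive real number
satisfying condition `C(n)`. Then `ξ ≥ 8/(9k + 2)`. -/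
theorem stmt9 (k n : ℤ) (hk : 1 ≤ k) (hn : n = 3 * k) (ξ : ℝ) (hξ : 0 < ξ)
    (hC : ∀ m : ℤ, ((m : ℝ) - (n : ℝ)) * ξ > 1 →
      (m : ℝ) * ξ ≥ 2 + (⌈((m : ℝ) - (n : ℝ)) * ξ⌉ : ℝ)) :
    ξ ≥ 8 / (9 * (k : ℝ) + 2) := by
  subst hn
  have hk1 : (1:ℝ) ≤ (k:ℝ) := by exact_mod_cast hk
  -- Step 1: n * ξ ≥ 2
  have h1 : (3:ℝ) * k * ξ ≥ 2 := by
    set m0 : ℤ := 3*k + ⌈2/ξ⌉ with hm0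
    have hd : ((m0:ℝ) - ((3*k:ℤ):ℝ)) = (⌈2/ξ⌉ : ℝ) := by
      rw [hm0]; push_cast; ring
    have hle : (2/ξ : ℝ) ≤ (⌈2/ξ⌉ : ℝ) := Int.le_ceil _
    have hgt : ((m0:ℝ) - ((3*k:ℤ):ℝ)) * ξ > 1 := by
      rw [hd]
      have h2 : (2:ℝ) ≤ (⌈2/ξ⌉ : ℝ) * ξ := by
        have h3 := mul_le_mul_of_nonneg_right hle hξ.le
        rwa [div_mul_cancel₀ _ hξ.ne'] at h3
      linarith
    have hm := hC m0 hgt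
    have hce : ((m0:ℝ) - ((3*k:ℤ):ℝ)) * ξ ≤ (⌈((m0:ℝ) - ((3*k:ℤ):ℝ)) * ξ⌉ : ℝ) :=
      Int.le_ceil _
    push_cast at hm hce ⊢
    nlinarith
  -- Step 2: apply C at m = ⌊9k/2⌋ + 1
  set m : ℤ := 9*k/2 + 1 with hmdef
  have h2m : 2*m ≤ 9*k + 2 := by omega
  have h2m' : 3*k + 1 ≤ 2*(m - 3*k) := by omega
  have hmpos : (5:ℤ) ≤ m := by omega
  have h2mR : 2*(m:ℝ) ≤ 9*(k:ℝ) + 2 := by exact_mod_cast h2m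
  have h2mR' : 3*(k:ℝ) + 1 ≤ 2*((m:ℝ) - 3*(k:ℝ)) := by
    have : ((3*k+1:ℤ):ℝ) ≤ ((2*(m-3*k):ℤ):ℝ) := by exact_mod_cast h2m'
    push_cast at this; linarith
  have hgt : ((m:ℝ) - ((3*k:ℤ):ℝ)) * ξ > 1 := by
    push_cast
    nlinarith
  have hm2 := hC m hgt
  have hceil2 : (2:ℤ) ≤ ⌈((m:ℝ) - ((3*k:ℤ):ℝ)) * ξ⌉ := by
    have : (1:ℤ) < ⌈((m:ℝ) - ((3*k:ℤ):ℝ)) * ξ⌉ := by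
      rw [Int.lt_ceil]; push_cast; push_cast at hgt; linarith
    omega
  have hceil2R : (2:ℝ) ≤ (⌈((m:ℝ) - ((3*k:ℤ):ℝ)) * ξ⌉ : ℝ) := by exact_mod_cast hceil2
  have h4 : (m:ℝ) * ξ ≥ 4 := by linarith
  have hmRpos : (0:ℝ) < (m:ℝ) := by exact_mod_cast (by omega : (0:ℤ) < m)
  rw [ge_iff_le, div_le_iff₀ (by linarith)]
  nlinarith
end

section
/- Let k ≥ 1 and l ≥ 1 be integers, n = 3k, and ξ a positive real number satisfying condition C(n). If ξ ≥ 2·4^l / ((2·4^l + 1)k + (4^{l+1} − 4)/3), then ξ ≥ 2·4^{l+1} / ((2·4^{l+1} + 1)k + (4^{l+2} − 4)/3). (Here (4^{l+1} − 4)/3 = 4^l + 4^{l−1} + ⋯ + 4.) -/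
set_option maxHeartbeats 1000000


/-- Let `k ≥ 1` and `l ≥ 1` be integers, `n = 3k`, and `ξ` a positive real
number satisfying condition `C(n)`.
If `ξ ≥ 2·4^l / ((2·4^l + 1)k + (4^(l+1) − 4)/3)`, then
`ξ ≥ 2·4^(l+1) / ((2·4^(l+1) + 1)k + (4^(l+2) − 4)/3)`. -/
theorem stmt10 (k n : ℤ) (l : ℕ) (hk : 1 ≤ k) (hl : 1 ≤ l) (hn : n = 3 * k)
    (ξ : ℝ) (hξ : 0 < ξ)
    (hC : ∀ m : ℤ, ((m : ℝ) - (n : ℝ)) * ξ > 1 →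
      (m : ℝ) * ξ ≥ 2 + (⌈((m : ℝ) - (n : ℝ)) * ξ⌉ : ℝ))
    (hind : ξ ≥ 2 * 4 ^ l / ((2 * 4 ^ l + 1) * (k : ℝ) + (4 ^ (l + 1) - 4) / 3)) :
    ξ ≥ 2 * 4 ^ (l + 1) / ((2 * 4 ^ (l + 1) + 1) * (k : ℝ) + (4 ^ (l + 2) - 4) / 3) := by
  -- integer setup
  have h3dvd : (3:ℤ) ∣ 4 ^ (l + 1) - 4 := by
    have h1 : (3:ℤ) ∣ 4 ^ l - 1 := by
      have := sub_dvd_pow_sub_pow (4:ℤ) 1 l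
      simpa using this
    have : (4:ℤ) ^ (l+1) - 4 = 4 * (4 ^ l - 1) := by ring
    rw [this]
    exact Dvd.dvd.mul_left h1 4
  set s : ℤ := (4 ^ (l + 1) - 4) / 3 with hs
  have hs3 : 3 * s = 4 ^ (l + 1) - 4 := Int.mul_ediv_cancel' h3dvd
  have hpowpos : (0:ℤ) < 4 ^ l := pow_pos (by norm_num) l
  have hp4 : (4:ℤ) ^ (l+1) = 4 * 4 ^ l := by rw [pow_succ]; ring
  have hspos : 0 ≤ s := by nlinarith [hs3, hpowpos, hp4]
  set a : ℤ := 2 * 4 ^ l with ha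
  have hapos : 0 < a := by positivity
  have h2a : 2 * a = 4 ^ (l + 1) := by rw [ha, pow_succ]; ring
  set b : ℤ := (2 * 4 ^ l + 1) * k + s with hb
  have hbpos : 0 < b := by nlinarith [hpowpos, hspos]
  set q : ℤ := b / a with hq
  have hmod := Int.mul_ediv_add_emod b a
  have hmod0 : 0 ≤ b % a := Int.emod_nonneg b (ne_of_gt hapos)
  have hmodlt : b % a < a := Int.emod_lt_of_pos b hapos
  have hq1 : a * q ≤ b := by rw [hq]; linarith [hmod0, hmod]
  have hq2 : b < a * (q + 1) := by
    have he : a * (q + 1) = a * (b / a) + a := by rw [hq]; ring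
    linarith [hmodlt, hmod]
  have hq0 : 0 ≤ q := Int.ediv_nonneg hbpos.le hapos.le
  -- casts
  have hscast : (s:ℝ) = ((4:ℝ) ^ (l + 1) - 4) / 3 := by
    have : (3:ℝ) * (s:ℝ) = (4:ℝ) ^ (l+1) - 4 := by exact_mod_cast congrArg (Int.cast : ℤ → ℝ) hs3
    linarith
  have hbcast : (b:ℝ) = (2 * 4 ^ l + 1) * (k : ℝ) + (4 ^ (l + 1) - 4) / 3 := by
    rw [hb]; push_cast [hscast]; ring
  have hbRpos : (0:ℝ) < (b:ℝ) := by exact_mod_cast hbpos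
  have haRpos : (0:ℝ) < (a:ℝ) := by exact_mod_cast hapos
  have hacast : (a:ℝ) = 2 * 4 ^ l := by rw [ha]; push_cast; ring
  have hind' : ξ ≥ (a:ℝ) / (b:ℝ) := by rw [hacast, hbcast]; exact hind
  -- apply the condition at m = q + 3k + 2
  set m : ℤ := q + 3 * k + 2 with hm
  have hmn : ((m:ℝ) - (n:ℝ)) = (q:ℝ) + 2 := by rw [hm, hn]; push_cast; ring
  have hqa : b < (q + 2) * a := by nlinarith
  have hgt : ((m : ℝ) - (n : ℝ)) * ξ > 1 := by
    rw [hmn]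
    have hq2R : (0:ℝ) < (q:ℝ) + 2 := by
      have : (0:ℝ) ≤ (q:ℝ) := by exact_mod_cast hq0
      linarith
    have hqaR : (b:ℝ) < ((q:ℝ) + 2) * (a:ℝ) := by exact_mod_cast hqa
    have h1 : (1:ℝ) < (((q:ℝ) + 2) * (a:ℝ)) / (b:ℝ) := (one_lt_div hbRpos).mpr hqaR
    have h2 : (((q:ℝ) + 2) * (a:ℝ)) / (b:ℝ) = ((q:ℝ) + 2) * ((a:ℝ) / (b:ℝ)) := by ring
    have h3 : ((q:ℝ) + 2) * ((a:ℝ) / (b:ℝ)) ≤ ((q:ℝ) + 2) * ξ :=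
      mul_le_mul_of_nonneg_left hind' hq2R.le
    linarith
  have hCm := hC m hgt
  have hceil : (2:ℤ) ≤ ⌈((m : ℝ) - (n : ℝ)) * ξ⌉ := by
    have := Int.lt_ceil.mpr (show ((1:ℤ):ℝ) < ((m : ℝ) - (n : ℝ)) * ξ by exact_mod_cast hgt)
    omega
  have hm4 : (m:ℝ) * ξ ≥ 4 := by
    have : ((2:ℤ):ℝ) ≤ (⌈((m : ℝ) - (n : ℝ)) * ξ⌉ : ℝ) := by exact_mod_cast hceil
    push_cast at this
    linarith
  -- conclude
  set D : ℤ := 4 * b + 4 - 3 * k with hD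
  have hDpos : 0 < D := by nlinarith
  have ham : a * m ≤ D := by
    have : a * m = a * q + 3 * a * k + 2 * a := by rw [hm]; ring
    nlinarith [hq1, hs3, h2a]
  have hmpos : 0 < m := by omega
  have hmRpos : (0:ℝ) < (m:ℝ) := by exact_mod_cast hmpos
  have hDRpos : (0:ℝ) < (D:ℝ) := by exact_mod_cast hDpos
  have hξ4m : ξ ≥ 4 / (m:ℝ) := by
    rw [ge_iff_le, div_le_iff₀ hmRpos]
    linarith [hm4]
  have hfin : 4 / (m:ℝ) ≥ 4 * (a:ℝ) / (D:ℝ) := by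
    rw [ge_iff_le, div_le_div_iff₀ hDRpos hmRpos]
    have : (a:ℝ) * (m:ℝ) ≤ (D:ℝ) := by exact_mod_cast ham
    nlinarith
  have htarget : 2 * 4 ^ (l + 1) / ((2 * 4 ^ (l + 1) + 1) * (k : ℝ) + (4 ^ (l + 2) - 4) / 3)
      = 4 * (a:ℝ) / (D:ℝ) := by
    rw [hD, hb, ha]
    push_cast [hscast]
    ring
  rw [htarget]
  linarith
end

section
/- Let k ≥ 1 and t ≥ 4 be integers, n = 3k, and ξ a positive real number satisfying condition C(n). If ξ ≥ t/(tk + 1), i.e., ξ ≥ 1/(k + 1/t), then ξ ≥ (t + 1)/((t + 1)k + 1), i.e., ξ ≥ 1/(k + 1/(t + 1)). -/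
/-- Let `k ≥ 1` and `t ≥ 4` be integers, `n = 3k`, and `ξ` a positive real
number satisfying condition `C(n)`. If `ξ ≥ t/(tk + 1)`, then `ξ ≥ (t + 1)/((t + 1)k + 1)`. -/
theorem stmt12 (k n t : ℤ) (hk : 1 ≤ k) (ht : 4 ≤ t) (hn : n = 3 * k)
    (ξ : ℝ) (hξ : 0 < ξ)
    (hC : ∀ m : ℤ, ((m : ℝ) - (n : ℝ)) * ξ > 1 →
      (m : ℝ) * ξ ≥ 2 + (⌈((m : ℝ) - (n : ℝ)) * ξ⌉ : ℝ))
    (hind : ξ ≥ (t : ℝ) / ((t : ℝ) * (k : ℝ) + 1)) :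
    ξ ≥ ((t : ℝ) + 1) / (((t : ℝ) + 1) * (k : ℝ) + 1) := by
  have hkR : (1 : ℝ) ≤ (k : ℝ) := by exact_mod_cast hk
  have htR : (4 : ℝ) ≤ (t : ℝ) := by exact_mod_cast ht
  have hden : (0 : ℝ) < (t : ℝ) * k + 1 := by nlinarith
  set m : ℤ := (t + 1) * k + 1 with hm
  have hmn : ((m : ℝ) - (n : ℝ)) = ((t : ℝ) - 2) * k + 1 := by
    push_cast [hm, hn]; ring
  -- lower bound on (m - n) * ξ
  have hlow : ((m : ℝ) - (n : ℝ)) * ξ > (t : ℝ) - 2 := by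
    rw [hmn]
    have hpos : (0 : ℝ) < ((t : ℝ) - 2) * k + 1 := by nlinarith
    have h1 : (((t : ℝ) - 2) * k + 1) * ξ ≥ (((t : ℝ) - 2) * k + 1) * ((t : ℝ) / ((t : ℝ) * k + 1)) :=
      by exact mul_le_mul_of_nonneg_left hind (le_of_lt hpos)
    have h2 : (((t : ℝ) - 2) * k + 1) * ((t : ℝ) / ((t : ℝ) * k + 1)) > (t : ℝ) - 2 := by
      rw [gt_iff_lt, ← mul_div_assoc, lt_div_iff₀ hden]
      nlinarith
    linarith
  have hgt1 : ((m : ℝ) - (n : ℝ)) * ξ > 1 := by linarith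
  have hceil : ((t : ℤ) - 1 : ℤ) ≤ ⌈((m : ℝ) - (n : ℝ)) * ξ⌉ := by
    have : ((t : ℤ) - 2) < ⌈((m : ℝ) - (n : ℝ)) * ξ⌉ := by
      rw [Int.lt_ceil]; push_cast; linarith
    omega
  have hCm := hC m hgt1
  have hceilR : ((t : ℝ) - 1) ≤ (⌈((m : ℝ) - (n : ℝ)) * ξ⌉ : ℝ) := by exact_mod_cast hceil
  have hmx : (m : ℝ) * ξ ≥ (t : ℝ) + 1 := by linarith
  have hmR : (m : ℝ) = ((t : ℝ) + 1) * k + 1 := by push_cast [hm]; ring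
  have hmpos : (0 : ℝ) < ((t : ℝ) + 1) * k + 1 := by nlinarith
  rw [ge_iff_le, div_le_iff₀ hmpos]
  rw [hmR] at hmx
  linarith
end

section
/- Let k ≥ 1 be an integer, n = 3k, and ξ a positive real number satisfying condition C(n). Then ξ ≥ 1/k = 3/n. -/
/-- Let `k ≥ 1` be an integer, `n = 3k`, and `ξ` a positive real number
satisfying condition `C(n)`. Then `ξ ≥ 1/k = 3/n`. -/
theorem stmt13 (k n : ℤ) (hk : 1 ≤ k) (hn : n = 3 * k) (ξ : ℝ) (hξ : 0 < ξ)
    (hC : ∀ m : ℤ, ((m : ℝ) - (n : ℝ)) * ξ > 1 →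
      (m : ℝ) * ξ ≥ 2 + (⌈((m : ℝ) - (n : ℝ)) * ξ⌉ : ℝ)) :
    ξ ≥ 1 / (k : ℝ) ∧ 1 / (k : ℝ) = 3 / (n : ℝ) := by
  have hk0 : (0:ℝ) < (k:ℝ) := by exact_mod_cast hk
  have hkR : (1:ℝ) ≤ (k:ℝ) := by exact_mod_cast hk
  -- Step 1: 2 ≤ n ξ
  have hn2 : (2:ℝ) ≤ (n:ℝ) * ξ := by
    set d : ℤ := ⌈(2:ℝ)/ξ⌉ with hd_def
    have hd : (2:ℝ)/ξ ≤ (d:ℝ) := Int.le_ceil _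
    have hdξ : (2:ℝ) ≤ (d:ℝ) * ξ := by
      rw [div_le_iff₀ hξ] at hd; linarith
    have h1 : (((n+d : ℤ) : ℝ) - (n:ℝ)) * ξ > 1 := by push_cast; ring_nf; nlinarith
    have key := hC (n+d) h1
    rw [show (((n+d : ℤ)) : ℝ) = (n:ℝ) + (d:ℝ) by push_cast; ring] at key
    have hc2 : (d:ℝ) * ξ ≤ (⌈((n:ℝ) + (d:ℝ) - (n:ℝ)) * ξ⌉ : ℝ) := by
      rw [show (n:ℝ) + (d:ℝ) - (n:ℝ) = (d:ℝ) by ring]; exact Int.le_ceil _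
    nlinarith [key, hc2]
  constructor
  · by_contra hlt
    push_neg at hlt
    have hkξ : (k:ℝ) * ξ < 1 := by
      rw [lt_div_iff₀ hk0] at hlt; linarith
    set β : ℝ := 1 - (k:ℝ) * ξ with hβ_def
    have hβ0 : 0 < β := by simp [hβ_def]; linarith
    have hβ3 : 3 * β ≤ 1 := by
      have : (n:ℝ) = 3 * (k:ℝ) := by exact_mod_cast hn
      rw [this] at hn2
      simp only [hβ_def]
      nlinarith
    have hinvβ : (3:ℝ) ≤ 1/β := by rw [le_div_iff₀ hβ0]; linarith
    set j : ℤ := ⌈(1:ℝ)/β⌉ - 1 with hj_def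
    have hj2 : (2:ℤ) ≤ j := by
      have h3 : (3:ℤ) ≤ ⌈(1:ℝ)/β⌉ := by
        have := Int.le_ceil ((1:ℝ)/β)
        have : (3:ℝ) ≤ (⌈(1:ℝ)/β⌉ : ℝ) := le_trans hinvβ this
        exact_mod_cast this
      omega
    have hj2R : (2:ℝ) ≤ (j:ℝ) := by exact_mod_cast hj2
    have hjlt : (j:ℝ) < 1/β := by
      have := Int.ceil_lt_add_one ((1:ℝ)/β)
      have hjc : (j:ℝ) = (⌈(1:ℝ)/β⌉ : ℝ) - 1 := by push_cast [hj_def]; ring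
      linarith
    have hjβ : (j:ℝ) * β < 1 := by
      rw [lt_div_iff₀ hβ0] at hjlt; linarith
    have hjβ1 : (1:ℝ) ≤ ((j:ℝ) + 1) * β := by
      have : (1:ℝ)/β ≤ (⌈(1:ℝ)/β⌉ : ℝ) := Int.le_ceil _
      have hjc : ((j:ℝ) + 1) = (⌈(1:ℝ)/β⌉ : ℝ) := by push_cast [hj_def]; ring
      rw [hjc]
      rw [div_le_iff₀ hβ0] at this
      linarith
    -- apply hC at m = n + j*k
    have hval : (((n + j*k : ℤ) : ℝ) - (n:ℝ)) * ξ = (j:ℝ) - (j:ℝ) * β := by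
      push_cast
      simp only [hβ_def]
      ring
    have h1 : (((n + j*k : ℤ) : ℝ) - (n:ℝ)) * ξ > 1 := by
      rw [hval]; linarith
    have hceil : ⌈(((n + j*k : ℤ) : ℝ) - (n:ℝ)) * ξ⌉ = j := by
      rw [hval, Int.ceil_eq_iff]
      constructor
      · push_cast
        nlinarith
      · push_cast
        nlinarith
    have := hC (n + j*k) h1
    rw [hceil] at this
    have hnR : (n:ℝ) = 3 * (k:ℝ) := by exact_mod_cast hn
    push_cast at this
    rw [hnR] at this
    -- (3k + jk) ξ ≥ 2 + j, with kξ = 1 - β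
    have hkξβ : (k:ℝ) * ξ = 1 - β := by simp [hβ_def]
    nlinarith [hβ0, hjβ1, hj2R]
  · rw [hn]
    push_cast
    rw [eq_div_iff (by positivity), div_mul_eq_mul_div, mul_comm]
    field_simp
end

section
/- Let n ≥ 2 be an integer and ξ a positive real number satisfying condition C(n). Then ξ ≥ 6/(2n + (n mod 3)), where (n mod 3) denotes the minimal non-negative residue of n modulo 3. -/
/-- Let `n ≥ 2` be an integer and `ξ` a positive real number satisfying
condition `C(n)`. Then `ξ ≥ 6/(2n + (n mod 3))`. -/
theorem stmt14 (n : ℤ) (hn : 2 ≤ n) (ξ : ℝ) (hξ : 0 < ξ)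
    (hC : ∀ m : ℤ, ((m : ℝ) - (n : ℝ)) * ξ > 1 →
      (m : ℝ) * ξ ≥ 2 + (⌈((m : ℝ) - (n : ℝ)) * ξ⌉ : ℝ)) :
    ξ ≥ 6 / (2 * (n : ℝ) + ((n % 3 : ℤ) : ℝ)) := by
  set s : ℤ := (2 * n + n % 3) / 3 with hs_def
  have hs3 : 3 * s = 2 * n + n % 3 := by omega
  have hs2 : 2 ≤ s := by omega
  have h2sn : n < 2 * s := by omega
  have hr0 : (0 : ℤ) ≤ n % 3 := by omega
  -- real versions
  have hs3R : (3 : ℝ) * (s : ℝ) = 2 * (n : ℝ) + ((n % 3 : ℤ) : ℝ) := by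
    exact_mod_cast hs3
  -- Step 1: n * ξ ≥ 2
  have hn2 : (n : ℝ) * ξ ≥ 2 := by
    set t : ℤ := ⌈(2 : ℝ) / ξ⌉ with ht_def
    have ht : (2 : ℝ) / ξ ≤ (t : ℝ) := Int.le_ceil _
    have htξ : (t : ℝ) * ξ ≥ 2 := by
      rw [div_le_iff₀ hξ] at ht
      linarith
    have h1 : ((n + t : ℤ) : ℝ) - (n : ℝ) = (t : ℝ) := by push_cast; ring
    have := hC (n + t) (by rw [h1]; linarith)
    rw [h1] at this
    have hceil : (t : ℝ) * ξ ≤ (⌈(t : ℝ) * ξ⌉ : ℝ) := Int.le_ceil _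
    push_cast at this
    nlinarith
  -- Step 2: s * ξ > 1
  have hx1 : 1 < (s : ℝ) * ξ := by
    have h2s : (n : ℝ) < 2 * (s : ℝ) := by exact_mod_cast h2sn
    nlinarith
  -- Step 3: key inductive claim
  have key : ∀ k : ℕ, 1 ≤ k → (s : ℝ) * ξ < 2 →
      (2 * (k : ℝ) - 1) < (k : ℝ) * ((s : ℝ) * ξ) := by
    intro k hk hlt
    induction k with
    | zero => omega
    | succ k ih =>
      rcases Nat.eq_or_lt_of_le hk with h1 | h1
      · -- k + 1 = 1, base case
        have : k = 0 := by omega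
        subst this
        push_cast
        linarith
      · -- inductive step, k ≥ 1
        have hk1 : 1 ≤ k := by omega
        have ihk := ih hk1
        have hkpos : (0 : ℝ) < (k : ℝ) := by
          exact_mod_cast Nat.pos_of_ne_zero (by omega)
        -- apply hC with m = n + k * s
        have h1 : ((n + (k : ℤ) * s : ℤ) : ℝ) - (n : ℝ) = (k : ℝ) * (s : ℝ) := by
          push_cast; ring
        have hk1R : (1 : ℝ) ≤ (k : ℝ) := by exact_mod_cast hk1
        have hgt1 : ((k : ℝ) * (s : ℝ)) * ξ > 1 := by
          have : (k : ℝ) * ((s : ℝ) * ξ) > 1 := by nlinarith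
          nlinarith
        have hCm := hC (n + (k : ℤ) * s) (by rw [h1]; exact hgt1)
        rw [h1] at hCm
        -- ceiling lower bound: ⌈k s ξ⌉ ≥ 2k
        have hceil : (2 * (k : ℤ)) ≤ ⌈((k : ℝ) * (s : ℝ)) * ξ⌉ := by
          have : ((2 * (k : ℤ) - 1 : ℤ) : ℝ) < ((k : ℝ) * (s : ℝ)) * ξ := by
            push_cast
            nlinarith
          have := Int.lt_ceil.mpr this
          omega
        have hceilR : (2 * (k : ℝ)) ≤ (⌈((k : ℝ) * (s : ℝ)) * ξ⌉ : ℝ) := by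
          exact_mod_cast hceil
        push_cast at hCm
        -- so n ξ ≥ 2 + 2k - k s ξ
        have hnξ : (n : ℝ) * ξ ≥ 2 + 2 * (k : ℝ) - (k : ℝ) * ((s : ℝ) * ξ) := by
          nlinarith
        -- 3 s ξ = 2 n ξ + r ξ ≥ 2 n ξ
        have hrξ : (0 : ℝ) ≤ ((n % 3 : ℤ) : ℝ) * ξ := by
          have : (0 : ℝ) ≤ ((n % 3 : ℤ) : ℝ) := by exact_mod_cast hr0
          positivity
        have h3x : 3 * ((s : ℝ) * ξ) ≥ 2 * ((n : ℝ) * ξ) := by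
          nlinarith [hs3R]
        -- conclude (k+1) x > 2(k+1) - 1
        have hbound : (2 * (k : ℝ) + 3) * ((s : ℝ) * ξ) ≥ 4 * (k : ℝ) + 4 := by
          nlinarith
        push_cast
        nlinarith
  -- Step 4: s * ξ ≥ 2
  have hx2 : 2 ≤ (s : ℝ) * ξ := by
    by_contra hlt
    push_neg at hlt
    obtain ⟨k, hk⟩ := exists_nat_gt (1 / (2 - (s : ℝ) * ξ))
    have hpos : (0 : ℝ) < 2 - (s : ℝ) * ξ := by linarith
    have hdiv : (0 : ℝ) < 1 / (2 - (s : ℝ) * ξ) := by positivity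
    have hk1 : 1 ≤ k := by
      by_contra h
      have : k = 0 := by omega
      subst this
      simp at hk
      linarith
    have hkey := key k hk1 hlt
    have : 1 < (k : ℝ) * (2 - (s : ℝ) * ξ) := by
      rw [div_lt_iff₀ hpos] at hk
      linarith
    nlinarith
  -- Step 5: conclude
  have hden : (0 : ℝ) < 2 * (n : ℝ) + ((n % 3 : ℤ) : ℝ) := by
    have : (0 : ℝ) < (s : ℝ) := by exact_mod_cast (by omega : (0:ℤ) < s)
    linarith [hs3R]
  rw [ge_iff_le, div_le_iff₀ hden]
  nlinarith [hs3R]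
end
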